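/- Let F be a finite field, V a d-dimensional F-vector space, and α : V → F a function. Let B and B* be two bases of V, and let f and f* be the unique reduced polynomials in F[x_1,…,x_d] realizing α with respect to B and B* respectively (i.e., α(Σ_i a_i e_i) = f(a_1,…,a_d) for the basis vectors e_i of B, and similarly for B* and f*). Then f and f* have the same total degree. -/

import Mathlib

open MvPolynomial Finset

section Aux

universe uF

variable {F : Type uF} [Field F] [Fintype F]

/-- Reduce an exponent modulo the relation `x ^ q = x`. -/
def redExp (q e : ℕ) : ℕ := if e = 0 then 0 else (e - 1) % (q - 1) + 1

lemma redExp_le (q e : ℕ) : redExp q e ≤ e := by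
  unfold redExp
  split
  · omega
  · have := Nat.mod_le (e - 1) (q - 1)
    omega

lemma redExp_lt (q : ℕ) (hq : 2 ≤ q) (e : ℕ) : redExp q e < q := by
  unfold redExp
  split
  · omega
  · have : (e - 1) % (q - 1) < q - 1 := Nat.mod_lt _ (by omega)
    omega

lemma pow_aux (x : F) (k r : ℕ) :
    x ^ (k * (Fintype.card F - 1) + r + 1) = x ^ (r + 1) := by
  have hq2 : 2 ≤ Fintype.card F := Fintype.one_lt_card
  rcases eq_or_ne x 0 with rfl | hx
  · rw [zero_pow (by omega), zero_pow (by omega)]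
  · have h1 : x ^ (Fintype.card F - 1) = 1 := FiniteField.pow_card_sub_one_eq_one x hx
    rw [mul_comm k, pow_add, pow_add, pow_mul, h1, one_pow, one_mul, pow_one, ← pow_succ]

lemma pow_redExp (x : F) (e : ℕ) : x ^ redExp (Fintype.card F) e = x ^ e := by
  have hq2 : 2 ≤ Fintype.card F := Fintype.one_lt_card
  unfold redExp
  split
  · simp [*]
  · rename_i he
    obtain ⟨k, hkr⟩ : ∃ k, e = k * (Fintype.card F - 1) + (e - 1) % (Fintype.card F - 1) + 1 := by
      refine ⟨(e - 1) / (Fintype.card F - 1), ?_⟩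
      have := Nat.div_add_mod' (e - 1) (Fintype.card F - 1)
      omega
    have : x ^ e = x ^ ((e - 1) % (Fintype.card F - 1) + 1) := by
      conv_lhs => rw [hkr]
      exact pow_aux x k _
    rw [this]

variable {d : ℕ}

/-- The reduction of a polynomial modulo `x_i ^ q = x_i`. -/
noncomputable def reducePoly (h : MvPolynomial (Fin d) F) : MvPolynomial (Fin d) F :=
  ∑ m ∈ h.support,
    monomial (Finsupp.mapRange (redExp (Fintype.card F)) (by simp [redExp]) m) (coeff m h)

lemma eval_reducePoly (h : MvPolynomial (Fin d) F) (a : Fin d → F) :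
    eval a (reducePoly h) = eval a h := by
  rw [reducePoly, map_sum, eval_eq]
  refine Finset.sum_congr rfl fun m hm => ?_
  rw [eval_monomial]
  congr 1
  rw [Finsupp.prod_mapRange_index (by simp)]
  rw [Finsupp.prod]
  exact Finset.prod_congr rfl fun i _ => pow_redExp _ _

lemma reducePoly_mem (h : MvPolynomial (Fin d) F) :
    reducePoly h ∈ restrictDegree (Fin d) F (Fintype.card F - 1) := by
  refine Submodule.sum_mem _ fun m hm => ?_
  rw [mem_restrictDegree]
  intro s hs i
  have := support_monomial_subset hs
  simp only [Finset.mem_singleton] at this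
  subst this
  have h2 : 2 ≤ Fintype.card F := Fintype.one_lt_card
  have := redExp_lt (Fintype.card F) h2 (m i)
  simp only [Finsupp.mapRange_apply]
  omega

lemma totalDegree_reducePoly_le (h : MvPolynomial (Fin d) F) :
    (reducePoly h).totalDegree ≤ h.totalDegree := by
  refine (totalDegree_finset_sum _ _).trans (Finset.sup_le fun m hm => ?_)
  refine (totalDegree_monomial_le _ _).trans ?_
  refine le_trans ?_ (le_totalDegree hm)
  rw [Finsupp.sum_mapRange_index (by simp)]
  exact Finsupp.sum_le_sum fun i _ => redExp_le _ _

/-- Uniqueness of the reduced polynomial realizing a function. -/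
lemma reduced_eq_of_eval_eq (p q : MvPolynomial (Fin d) F)
    (hp : p ∈ restrictDegree (Fin d) F (Fintype.card F - 1))
    (hq : q ∈ restrictDegree (Fin d) F (Fintype.card F - 1))
    (h : ∀ v : Fin d → F, eval v p = eval v q) : p = q := by
  -- transfer to a common universe to apply `eq_zero_of_eval_eq_zero`
  let e : Fin d → ULift.{uF} (Fin d) := fun i => ULift.up i
  have he : Function.Injective e := fun a b hab => congrArg ULift.down hab
  have hmem : ∀ r : MvPolynomial (Fin d) F,
      r ∈ restrictDegree (Fin d) F (Fintype.card F - 1) →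
      rename e r ∈ restrictDegree (ULift (Fin d)) F (Fintype.card F - 1) := by
    intro r hr
    rw [mem_restrictDegree] at hr ⊢
    intro s hs i
    classical
    rw [support_rename_of_injective he, Finset.mem_image] at hs
    obtain ⟨m, hm, rfl⟩ := hs
    rcases i with ⟨i⟩
    have : Finsupp.mapDomain e m (e i) = m i := Finsupp.mapDomain_apply he m i
    exact this ▸ hr m hm i
  have key : rename e (p - q) = 0 := by
    refine MvPolynomial.eq_zero_of_eval_eq_zero (σ := ULift.{uF} (Fin d)) (K := F) _ (fun v => ?_) ?_
    · rw [eval_rename]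
      simp [h (v ∘ e)]
    · exact (map_sub (rename e) p q) ▸ Submodule.sub_mem _ (hmem p hp) (hmem q hq)
  have := rename_injective (R := F) e he (by simpa using key : rename e (p - q) = rename e 0)
  have hpq : p - q = 0 := by simpa using this
  exact sub_eq_zero.mp hpq

/-- A reduced polynomial with the same evaluations as `h` has total degree at most that
of `h`. -/
lemma totalDegree_le_of_reduced (p h : MvPolynomial (Fin d) F)
    (hp : ∀ m ∈ p.support, ∀ j, m j < Fintype.card F)
    (heval : ∀ v : Fin d → F, eval v p = eval v h) :
    p.totalDegree ≤ h.totalDegree := by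
  have hp' : p ∈ restrictDegree (Fin d) F (Fintype.card F - 1) := by
    rw [mem_restrictDegree]
    intro s hs i
    have := hp s hs i
    have h2 : 2 ≤ Fintype.card F := Fintype.one_lt_card
    omega
  have : p = reducePoly h :=
    reduced_eq_of_eval_eq _ _ hp' (reducePoly_mem h)
      (fun v => (heval v).trans (eval_reducePoly h v).symm)
  rw [this]
  exact totalDegree_reducePoly_le h

lemma eval_bind₁' (a : Fin d → F) (g : Fin d → MvPolynomial (Fin d) F)
    (p : MvPolynomial (Fin d) F) :
    eval a (bind₁ g p) = eval (fun i => eval a (g i)) p := by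
  show eval₂Hom (RingHom.id F) a (bind₁ g p) = _
  rw [eval₂Hom_bind₁]
  rfl

lemma totalDegree_bind₁_le (g : Fin d → MvPolynomial (Fin d) F)
    (hg : ∀ i, (g i).totalDegree ≤ 1) (p : MvPolynomial (Fin d) F) :
    (bind₁ g p).totalDegree ≤ p.totalDegree := by
  conv_lhs => rw [p.as_sum]
  rw [map_sum]
  refine (totalDegree_finset_sum _ _).trans (Finset.sup_le fun m hm => ?_)
  rw [bind₁_monomial]
  refine (totalDegree_mul _ _).trans ?_
  rw [totalDegree_C, zero_add]
  refine le_trans ((totalDegree_finset_prod _ _).trans ?_) (le_totalDegree hm)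
  calc ∑ i ∈ m.support, ((g i) ^ m i).totalDegree
      ≤ ∑ i ∈ m.support, m i * 1 := by
        refine Finset.sum_le_sum fun i _ => ?_
        exact (totalDegree_pow _ _).trans (Nat.mul_le_mul_left _ (hg i))
    _ = m.sum fun _ e => e := by simp [Finsupp.sum]

end Aux

/-- over a finite field, the reduced polynomials realizing the same
function `α : V → F` with respect to two bases of a `d`-dimensional space `V` have the
same total degree. -/
theorem totalDegree_of_reduced_realization_independent_of_basis
    {F V : Type*} [Field F] [Fintype F] [AddCommGroup V] [Module F V]
    {d : ℕ} (B B' : Module.Basis (Fin d) F V) (α : V → F)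
    (f f' : MvPolynomial (Fin d) F)
    (hf : ∀ m ∈ f.support, ∀ j, m j < Fintype.card F)
    (hf' : ∀ m ∈ f'.support, ∀ j, m j < Fintype.card F)
    (hreal : ∀ a : Fin d → F, α (∑ i, a i • B i) = MvPolynomial.eval a f)
    (hreal' : ∀ a : Fin d → F, α (∑ i, a i • B' i) = MvPolynomial.eval a f') :
    f.totalDegree = f'.totalDegree := by
  have key : ∀ (C C' : Module.Basis (Fin d) F V) (p p' : MvPolynomial (Fin d) F),
      (∀ m ∈ p'.support, ∀ j, m j < Fintype.card F) →
      (∀ a : Fin d → F, α (∑ i, a i • C i) = MvPolynomial.eval a p) →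
      (∀ a : Fin d → F, α (∑ i, a i • C' i) = MvPolynomial.eval a p') →
      p'.totalDegree ≤ p.totalDegree := by
    intro C C' p p' hp' hrC hrC'
    set g : Fin d → MvPolynomial (Fin d) F :=
      fun j => ∑ i, MvPolynomial.C (C.repr (C' i) j) * X i with hg
    have hgdeg : ∀ j, (g j).totalDegree ≤ 1 := by
      intro j
      refine totalDegree_finsetSum_le fun i _ => ?_
      refine (totalDegree_mul _ _).trans ?_
      simp [totalDegree_X]
    have heval : ∀ a : Fin d → F, eval a p' = eval a (bind₁ g p) := by
      intro a
      have hrep : ∀ j, C.repr (∑ i, a i • C' i) j = eval a (g j) := by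
        intro j
        simp [hg, map_sum, mul_comm]
      have hw : (∑ i, a i • C' i) = ∑ j, (eval a (g j)) • C j := by
        conv_lhs => rw [← C.sum_repr (∑ i, a i • C' i)]
        exact Finset.sum_congr rfl fun j _ => by rw [hrep j]
      rw [← hrC' a, hw, hrC, eval_bind₁']
    exact (totalDegree_le_of_reduced p' (bind₁ g p) hp' heval).trans
      (totalDegree_bind₁_le g hgdeg p)
  exact le_antisymm (key B' B f' f hf hreal' hreal) (key B B' f f' hf' hreal hreal')
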